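/- arXiv:1310.3933 — 2 statements merged into one kernel-verified Lean document; each statement's English description precedes it below -/
import Mathlib

section
/- Let c = (1−x²)²(1−y²)²(1−(x−y)²) in the polynomial ring ℤ[x,y], where x and y are given degree 1, and let c₄ denote the homogeneous component of c of degree 4. Then c₄² − 4·x³y⁵ lies in the ideal of ℤ[x,y] generated by x⁴ and y⁴(x−y)²; equivalently, c₄² is congruent to 4·x³y⁵ modulo that ideal. -/
open MvPolynomial

/-- `x` in `ℤ[x,y]`. -/
noncomputable def px : MvPolynomial (Fin 2) ℤ := X 0
/-- `y` in `ℤ[x,y]`. -/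
noncomputable def py : MvPolynomial (Fin 2) ℤ := X 1

/-- The total Chern class `c = (1−x²)²(1−y²)²(1−(x−y)²)` of `M(P⁸, λ₂^{⟨8⟩})`. -/
noncomputable def c8 : MvPolynomial (Fin 2) ℤ :=
  (1 - px ^ 2) ^ 2 * (1 - py ^ 2) ^ 2 * (1 - (px - py) ^ 2)

/-!
Each factor of `c` has the form `1 - a` with `a` homogeneous of degree 2, and the degree-`n`
component of `(1 - a) * p` is `pₙ - a * pₙ₋₂`. Peeling off the five factors gives
`c₄ = e₂(x², x², y², y², (x−y)²)`; the membership of `c₄² - 4x³y⁵` in the ideal is then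
witnessed by explicit cofactors of `x⁴` and `y⁴(x−y)²`.
-/

namespace MvPolynomial

variable {σ R : Type*} [CommRing R]

theorem homogeneousComponent_mul_of_isHomogeneous_left {a p : MvPolynomial σ R} {i : ℕ}
    (ha : a.IsHomogeneous i) (n : ℕ) :
    homogeneousComponent n (a * p) = if i ≤ n then a * homogeneousComponent (n - i) p else 0 := by
  let := MvPolynomial.gradedAlgebra (σ := σ) (R := R)
  simp only [← decomposition.decompose'_apply]
  exact DirectSum.coe_decompose_mul_of_left_mem (homogeneousSubmodule σ R) n ha

theorem homogeneousComponent_one_sub_mul {a p : MvPolynomial σ R} {i : ℕ}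
    (ha : a.IsHomogeneous i) (n : ℕ) :
    homogeneousComponent n ((1 - a) * p) =
      homogeneousComponent n p - if i ≤ n then a * homogeneousComponent (n - i) p else 0 := by
  rw [sub_mul, one_mul, map_sub, homogeneousComponent_mul_of_isHomogeneous_left ha]

theorem homogeneousComponent_one (n : ℕ) :
    homogeneousComponent n (1 : MvPolynomial σ R) = if n = 0 then 1 else 0 :=
  homogeneousComponent_of_mem (isHomogeneous_one σ R)

end MvPolynomial

theorem homogeneousComponent_four_c8 :
    homogeneousComponent 4 c8 =
      px ^ 4 + py ^ 4 + 4 * px ^ 2 * py ^ 2 + 2 * (px ^ 2 + py ^ 2) * (px - py) ^ 2 := by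
  have hx : (px ^ 2).IsHomogeneous 2 := (isHomogeneous_X ℤ 0).pow 2
  have hy : (py ^ 2).IsHomogeneous 2 := (isHomogeneous_X ℤ 1).pow 2
  have hxy : ((px - py) ^ 2).IsHomogeneous 2 :=
    ((isHomogeneous_X ℤ 0).sub (isHomogeneous_X ℤ 1)).pow 2
  have hc : c8 = (1 - px ^ 2) * ((1 - px ^ 2) * ((1 - py ^ 2) * ((1 - py ^ 2) *
      ((1 - (px - py) ^ 2) * 1)))) := by
    rw [c8]; ring
  simp only [hc, homogeneousComponent_one_sub_mul hx, homogeneousComponent_one_sub_mul hy,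
    homogeneousComponent_one_sub_mul hxy, homogeneousComponent_one]
  norm_num
  ring

/-- The homogeneous component `c₄` of `c` (with `x`, `y` of degree 1) satisfies
`c₄² ≡ 4·x³y⁵` modulo the ideal `⟨x⁴, y⁴(x−y)²⟩` of `ℤ[x,y]`. -/
theorem stmt2 :
    homogeneousComponent 4 c8 ^ 2 - 4 * px ^ 3 * py ^ 5 ∈
      Ideal.span ({px ^ 4, py ^ 4 * (px - py) ^ 2} : Set (MvPolynomial (Fin 2) ℤ)) := by
  rw [Ideal.mem_span_pair, homogeneousComponent_four_c8]
  exact ⟨9 * px ^ 4 - 24 * px ^ 3 * py + 64 * px ^ 2 * py ^ 2 - 88 * px * py ^ 3 + 71 * py ^ 4,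
    43 * px ^ 2 - 6 * px * py + 9 * py ^ 2, by ring⟩
end

section
/- Let c = (1−x²)²(1−y²)⁴(1−(x−y)²) in the polynomial ring ℤ[x,y], where x and y are given degree 1, and let c₆ denote the homogeneous component of c of degree 6. Then c₆² − 64·x³y⁹ lies in the ideal of ℤ[x,y] generated by x⁴ and y⁸(x−y)²; equivalently, c₆² is congruent to 64·x³y⁹ modulo that ideal. -/
open MvPolynomial

/-- The total Chern class `c = (1−x²)²(1−y²)⁴(1−(x−y)²)` of `M(P¹², λ₂^{⟨12⟩})`. -/
noncomputable def c12 : MvPolynomial (Fin 2) ℤ :=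
  (1 - px ^ 2) ^ 2 * (1 - py ^ 2) ^ 4 * (1 - (px - py) ^ 2)

/-!
Each factor of `c` has the form `1 + a` with `a ∈ {−x², −y², −(x−y)²}` homogeneous of degree 2,
so expanding `c = ∏ (1 + aᵢ)` sorts it by degree: its degree-`2k` part is the elementary
symmetric function `eₖ` of the seven `aᵢ`. Hence `c₆ = e₃`, an explicit sextic in `x`, `y`, and
the congruence `c₆² ≡ 64·x³y⁹` is a polynomial identity with explicit cofactors.
-/

theorem Multiset.prod_map_one_add_eq_sum_esymm {R : Type*} [CommSemiring R] (s : Multiset R) :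
    (s.map (1 + ·)).prod = ∑ j ∈ Finset.range (card s + 1), s.esymm j := by
  simpa [Polynomial.eval_multiset_prod, Polynomial.eval_finsetSum, Multiset.map_map, add_comm]
    using congrArg (Polynomial.eval 1) (Multiset.prod_X_add_C_eq_sum_esymm s)

theorem Multiset.esymm_three_of_multiplicities_two_four_one {R : Type*} [CommSemiring R]
    (a b d : R) :
    esymm {a, a, b, b, b, b, d} 3 =
      4 * a ^ 2 * b + a ^ 2 * d + 12 * a * b ^ 2 + 8 * a * b * d + 4 * b ^ 3 + 6 * b ^ 2 * d := by
  simp [esymm, insert_eq_cons, powersetCard_cons, powersetCard_one]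
  ring

namespace MvPolynomial

variable {σ R : Type*} [CommSemiring R]

theorem IsHomogeneous.multiset_prod {s : Multiset (MvPolynomial σ R)} {m : ℕ}
    (hs : ∀ a ∈ s, a.IsHomogeneous m) : s.prod.IsHomogeneous (m * Multiset.card s) := by
  induction s using Multiset.induction_on with
  | empty => simpa using isHomogeneous_one σ R
  | cons a s ih =>
    rw [Multiset.prod_cons, Multiset.card_cons, mul_add_one, add_comm]
    exact (hs a (Multiset.mem_cons_self a s)).mul
      (ih fun b hb => hs b (Multiset.mem_cons_of_mem hb))

theorem IsHomogeneous.esymm {s : Multiset (MvPolynomial σ R)} {m : ℕ}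
    (hs : ∀ a ∈ s, a.IsHomogeneous m) (k : ℕ) : (s.esymm k).IsHomogeneous (m * k) := by
  refine (homogeneousSubmodule σ R (m * k)).multiset_sum_mem _ fun p hp => ?_
  obtain ⟨t, ht, rfl⟩ := Multiset.mem_map.1 hp
  obtain ⟨hts, htk⟩ := Multiset.mem_powersetCard.1 ht
  simpa [htk] using IsHomogeneous.multiset_prod fun a ha => hs a (Multiset.mem_of_le hts ha)

theorem homogeneousComponent_finsetSum_of_isHomogeneous {ι : Type*} {s : Finset ι}
    {p : ι → MvPolynomial σ R} {deg : ι → ℕ} (hp : ∀ i ∈ s, (p i).IsHomogeneous (deg i))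
    (hdeg : Set.InjOn deg s) {k : ι} (hk : k ∈ s) :
    homogeneousComponent (deg k) (∑ i ∈ s, p i) = p k := by
  rw [map_sum, Finset.sum_eq_single_of_mem k hk, homogeneousComponent_eq_self (hp k hk)]
  intro i hi hik
  rw [homogeneousComponent_of_mem (hp i hi), if_neg fun h => hik (hdeg hi hk h.symm)]

theorem homogeneousComponent_prod_one_add {s : Multiset (MvPolynomial σ R)} {m : ℕ} (hm : 0 < m)
    (hs : ∀ a ∈ s, a.IsHomogeneous m) {k : ℕ} (hk : k ≤ Multiset.card s) :
    homogeneousComponent (m * k) (s.map (1 + ·)).prod = s.esymm k := by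
  rw [Multiset.prod_map_one_add_eq_sum_esymm]
  exact homogeneousComponent_finsetSum_of_isHomogeneous (fun j _ => IsHomogeneous.esymm hs j)
    (fun _ _ _ _ h => Nat.eq_of_mul_eq_mul_left hm h) (Finset.mem_range_succ_iff.2 hk)

end MvPolynomial

theorem isHomogeneous_px : px.IsHomogeneous 1 := isHomogeneous_X ℤ 0

theorem isHomogeneous_py : py.IsHomogeneous 1 := isHomogeneous_X ℤ 1

theorem homogeneousComponent_six_c12 :
    homogeneousComponent 6 c12 =
      Multiset.esymm {-px ^ 2, -px ^ 2, -py ^ 2, -py ^ 2, -py ^ 2, -py ^ 2, -(px - py) ^ 2} 3 := by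
  have hx : (-px ^ 2).IsHomogeneous 2 := (isHomogeneous_px.pow 2).neg
  have hy : (-py ^ 2).IsHomogeneous 2 := (isHomogeneous_py.pow 2).neg
  have hxy : (-(px - py) ^ 2).IsHomogeneous 2 :=
    ((isHomogeneous_px.sub isHomogeneous_py).pow 2).neg
  rw [← homogeneousComponent_prod_one_add (m := 2) two_pos (by simp [hx, hy, hxy]) (by simp)]
  congr 1
  simp only [c12, Multiset.insert_eq_cons, Multiset.map_cons, Multiset.prod_cons,
    Multiset.map_singleton, Multiset.prod_singleton]
  ring

/-- The homogeneous component `c₆` of `c` (with `x`, `y` of degree 1) satisfies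
`c₆² ≡ 64·x³y⁹` modulo the ideal `⟨x⁴, y⁸(x−y)²⟩` of `ℤ[x,y]`. -/
theorem stmt5 :
    homogeneousComponent 6 c12 ^ 2 - 64 * px ^ 3 * py ^ 9 ∈
      Ideal.span ({px ^ 4, py ^ 8 * (px - py) ^ 2} : Set (MvPolynomial (Fin 2) ℤ)) := by
  rw [homogeneousComponent_six_c12, Multiset.esymm_three_of_multiplicities_two_four_one,
    Ideal.mem_span_pair]
  exact ⟨836 * py ^ 8 - 1184 * px * py ^ 7 + 1000 * px ^ 2 * py ^ 6 - 544 * px ^ 3 * py ^ 5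
      + 285 * px ^ 4 * py ^ 4 - 84 * px ^ 5 * py ^ 3 + 30 * px ^ 6 * py ^ 2 - 4 * px ^ 7 * py
      + px ^ 8,
    100 * py ^ 2 - 40 * px * py + 484 * px ^ 2, by ring⟩
end
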